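/- Let α, β : ℝ³ → ℝ be continuously differentiable and 2π-periodic in each coordinate, with α − β equal to a constant c satisfying |c| = 2, and set λ = (α + β)/2. Let u, B : ℝ³ → ℝ³ be twice continuously differentiable, 2π-periodic in each coordinate, with div u = 0, div B = 0, B + curl u = α u, and u − curl B = −β B pointwise on ℝ³. Then curl u = λ u and curl B = λ B pointwise on ℝ³. -/

import Mathlib

noncomputable section

open Real MeasureTheory

/-- ℝ³ as coordinate functions. -/
abbrev V3 : Type := Fin 3 → ℝ

/-- Partial derivative in the `i`-th coordinate direction. -/
noncomputable def pd (i : Fin 3) (f : V3 → ℝ) (x : V3) : ℝ :=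
  fderiv ℝ f x (Pi.single i 1)

/-- Curl of a vector field on ℝ³:
`curl v = (∂₂v₃ − ∂₃v₂, ∂₃v₁ − ∂₁v₃, ∂₁v₂ − ∂₂v₁)`. -/
noncomputable def curl (v : V3 → V3) (x : V3) : V3 :=
  ![pd 1 (fun y => v y 2) x - pd 2 (fun y => v y 1) x,
    pd 2 (fun y => v y 0) x - pd 0 (fun y => v y 2) x,
    pd 0 (fun y => v y 1) x - pd 1 (fun y => v y 0) x]

/-- Divergence of a vector field on ℝ³. -/
noncomputable def div3 (v : V3 → V3) (x : V3) : ℝ :=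
  pd 0 (fun y => v y 0) x + pd 1 (fun y => v y 1) x + pd 2 (fun y => v y 2) x

/-- Gradient of a scalar function on ℝ³. -/
noncomputable def grad (f : V3 → ℝ) (x : V3) : V3 :=
  ![pd 0 f x, pd 1 f x, pd 2 f x]

/-- Cross product on ℝ³. -/
def cross (a b : V3) : V3 :=
  ![a 1 * b 2 - a 2 * b 1, a 2 * b 0 - a 0 * b 2, a 0 * b 1 - a 1 * b 0]

/-- Componentwise Laplacian of a vector field. -/
noncomputable def lap (v : V3 → V3) (x : V3) : V3 :=
  fun j => ∑ i : Fin 3, pd i (fun y => pd i (fun z => v z j) y) x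

/-- Advection term `((u·∇)w)_j = Σ_i u_i ∂_i w_j`. -/
noncomputable def adv (u w : V3 → V3) (x : V3) : V3 :=
  fun j => ∑ i : Fin 3, u x i * pd i (fun y => w y j) x

/-- Time derivative of a time-dependent vector field. -/
noncomputable def dt (u : ℝ → V3 → V3) (t : ℝ) (x : V3) : V3 :=
  fun j => deriv (fun s => u s x j) t

-- basic pd lemmas
lemma pd_sub {f g : V3 → ℝ} {x : V3} (i : Fin 3)
    (hf : DifferentiableAt ℝ f x) (hg : DifferentiableAt ℝ g x) :
    pd i (fun y => f y - g y) x = pd i f x - pd i g x := by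
  unfold pd
  rw [fderiv_fun_sub hf hg]
  simp

lemma pd_const_mul {f : V3 → ℝ} {x : V3} (i : Fin 3) (k : ℝ)
    (hf : DifferentiableAt ℝ f x) :
    pd i (fun y => k * f y) x = k * pd i f x := by
  unfold pd
  rw [fderiv_const_mul hf]
  simp

lemma pd_mul {f g : V3 → ℝ} {x : V3} (i : Fin 3)
    (hf : DifferentiableAt ℝ f x) (hg : DifferentiableAt ℝ g x) :
    pd i (fun y => f y * g y) x = f x * pd i g x + g x * pd i f x := by
  unfold pd
  rw [fderiv_fun_mul hf hg]
  simp

lemma pd_comp_apply {F : V3 → V3} {x : V3} (i : Fin 3) (j : Fin 3)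
    (hF : ∀ j, DifferentiableAt ℝ (fun y => F y j) x) :
    (fderiv ℝ F x (Pi.single i 1)) j = pd i (fun y => F y j) x := by
  have : fderiv ℝ F x = ContinuousLinearMap.pi (fun j => fderiv ℝ (fun y => F y j) x) := by
    exact fderiv_pi hF
  rw [this]
  rfl


lemma integral_div3_cube (F : V3 → V3) (hF : ContDiff ℝ 1 F)
    (hper : ∀ (x : V3) (i : Fin 3), F (x + Pi.single i (2 * π)) = F x) (a : V3) :
    ∫ x in Set.Icc a (fun i => a i + 2 * π), div3 F x = 0 := by
  set b : V3 := fun i => a i + 2 * π with hb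
  have hle : a ≤ b := by
    intro i
    have := pi_pos
    simp [hb]
    positivity
  have hdiff : Differentiable ℝ F := hF.differentiable one_ne_zero
  have hdercont : Continuous fun x => ∑ i : Fin 3, fderiv ℝ F x (Pi.single i 1) i := by
    apply continuous_finset_sum
    intro i _
    exact (continuous_apply i).comp ((hF.continuous_fderiv one_ne_zero).clm_apply continuous_const)
  have key := MeasureTheory.integral_divergence_of_hasFDerivAt_off_countable
      (a := a) (b := b) hle F (fun x => fderiv ℝ F x) ∅ Set.countable_empty
      hdiff.continuous.continuousOn
      (fun x _ => (hdiff x).hasFDerivAt)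
      (hdercont.continuousOn.integrableOn_compact isCompact_Icc)
  have hfaces : ∀ i : Fin 3,
      ((∫ x in Set.Icc (a ∘ Fin.succAbove i) (b ∘ Fin.succAbove i), F (Fin.insertNth i (b i) x) i) -
       ∫ x in Set.Icc (a ∘ Fin.succAbove i) (b ∘ Fin.succAbove i), F (Fin.insertNth i (a i) x) i) = 0 := by
    intro i
    have : ∀ x : Fin 2 → ℝ, F (Fin.insertNth (α := fun _ => ℝ) i (b i) x) i
        = F (Fin.insertNth (α := fun _ => ℝ) i (a i) x) i := by
      intro x
      have hins : Fin.insertNth (α := fun _ => ℝ) i (b i) x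
          = Fin.insertNth (α := fun _ => ℝ) i (a i) x + Pi.single i (2 * π) := by
        funext j
        refine Fin.succAboveCases i ?_ ?_ j
        · simp [hb]
        · intro j'
          simp [Pi.single_eq_of_ne (Fin.succAbove_ne i j')]
      rw [hins, hper]
    simp only [this, sub_self]
  rw [Finset.sum_congr rfl (fun i _ => hfaces i), Finset.sum_const, smul_zero] at key
  rw [← key]
  apply MeasureTheory.setIntegral_congr_fun measurableSet_Icc
  intro x _
  have hcomp : ∀ j : Fin 3, DifferentiableAt ℝ (fun y => F y j) x := by
    intro j
    exact ((differentiable_apply j).comp hdiff) x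
  show div3 F x = ∑ i : Fin 3, (fderiv ℝ F x) (Pi.single i 1) i
  rw [Fin.sum_univ_three, pd_comp_apply 0 0 hcomp, pd_comp_apply 1 1 hcomp,
    pd_comp_apply 2 2 hcomp]
  rfl

lemma zero_of_integral_cube_zero (g : V3 → ℝ) (hg : Continuous g) (hnn : ∀ y, 0 ≤ g y)
    (a : V3) (hint : ∫ y in Set.Icc a (fun i => a i + 2 * π), g y = 0)
    (x : V3) (hx : ∀ i, a i < x i ∧ x i < a i + 2 * π) : g x = 0 := by
  set b : V3 := fun i => a i + 2 * π with hb
  by_contra h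
  have hgx : 0 < g x := lt_of_le_of_ne (hnn x) (Ne.symm h)
  have hinteg : IntegrableOn g (Set.Icc a b) :=
    hg.continuousOn.integrableOn_compact isCompact_Icc
  have hpos : 0 < ∫ y in Set.Icc a b, g y := by
    rw [MeasureTheory.setIntegral_pos_iff_support_of_nonneg_ae
      (Filter.Eventually.of_forall fun y => hnn y) hinteg]
    have hopen : IsOpen ({y | 0 < g y} ∩ Set.pi Set.univ fun i => Set.Ioo (a i) (b i)) :=
      (isOpen_lt continuous_const hg).inter (isOpen_set_pi Set.finite_univ
        (fun i _ => isOpen_Ioo))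
    have hxmem : x ∈ {y | 0 < g y} ∩ Set.pi Set.univ fun i => Set.Ioo (a i) (b i) :=
      ⟨hgx, fun i _ => ⟨(hx i).1, (hx i).2⟩⟩
    have hsub : ({y | 0 < g y} ∩ Set.pi Set.univ fun i => Set.Ioo (a i) (b i)) ⊆
        Function.support g ∩ Set.Icc a b := by
      rintro y ⟨hy1, hy2⟩
      exact ⟨ne_of_gt hy1, ⟨fun i => (hy2 i trivial).1.le, fun i => (hy2 i trivial).2.le⟩⟩
    calc (0 : ENNReal) < volume ({y | 0 < g y} ∩ Set.pi Set.univ fun i => Set.Ioo (a i) (b i)) :=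
          hopen.measure_pos volume ⟨x, hxmem⟩
      _ ≤ volume (Function.support g ∩ Set.Icc a b) := measure_mono hsub
  rw [hint] at hpos
  exact lt_irrefl 0 hpos

lemma pd_sub_const_mul {f g : V3 → ℝ} {x : V3} (i : Fin 3)
    (hf : DifferentiableAt ℝ f x) (hg : DifferentiableAt ℝ g x) (k : ℝ) :
    pd i (fun y => f y - k * g y) x = pd i f x - k * pd i g x := by
  rw [pd_sub i hf (hg.const_mul k), pd_const_mul i k hg]


/-- Theorem 2.2 (3): when `α − β = c` is constant with `|c| = 2`, every
periodic double Beltrami state is a single Beltrami flow with factor `λ = (α+β)/2`. -/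
theorem double_beltrami_degenerate_case
    (α β : V3 → ℝ) (c : ℝ)
    (hα : ContDiff ℝ 1 α) (hβ : ContDiff ℝ 1 β)
    (hαper : ∀ (x : V3) (i : Fin 3), α (x + Pi.single i (2 * π)) = α x)
    (hβper : ∀ (x : V3) (i : Fin 3), β (x + Pi.single i (2 * π)) = β x)
    (hc : ∀ x, α x - β x = c) (hc2 : |c| = 2)
    (lam : V3 → ℝ) (hlam : ∀ x, lam x = (α x + β x) / 2)
    (u B : V3 → V3)
    (hu : ContDiff ℝ 2 u) (hB : ContDiff ℝ 2 B)
    (huper : ∀ (x : V3) (i : Fin 3), u (x + Pi.single i (2 * π)) = u x)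
    (hBper : ∀ (x : V3) (i : Fin 3), B (x + Pi.single i (2 * π)) = B x)
    (hdivu : ∀ x, div3 u x = 0) (hdivB : ∀ x, div3 B x = 0)
    (h1 : ∀ x, B x + curl u x = α x • u x)
    (h2 : ∀ x, u x - curl B x = -(β x) • B x) :
    (∀ x, curl u x = lam x • u x) ∧ (∀ x, curl B x = lam x • B x) := by
  obtain ⟨k, hck, hk2⟩ : ∃ k : ℝ, c = 2 * k ∧ k * k = 1 := by
    refine ⟨c / 2, by ring, ?_⟩
    rcases (abs_eq (by norm_num : (0:ℝ) ≤ 2)).mp hc2 with h | h <;> rw [h] <;> norm_num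
  have hlamα : ∀ x, lam x = α x - k := by
    intro x; have h := hc x; rw [hlam]; rw [hck] at h; linarith
  have hbk : ∀ x, β x + k = lam x := by
    intro x; have h := hc x; rw [hlam]; rw [hck] at h; linarith
  -- component regularity
  have huc : ∀ j, ContDiff ℝ 1 (fun y => u y j) := fun j => (contDiff_pi.mp hu j).of_le one_le_two
  have hBc : ∀ j, ContDiff ℝ 1 (fun y => B y j) := fun j => (contDiff_pi.mp hB j).of_le one_le_two
  have hud : ∀ j, Differentiable ℝ (fun y => u y j) := fun j => (huc j).differentiable one_ne_zero
  have hBd : ∀ j, Differentiable ℝ (fun y => B y j) := fun j => (hBc j).differentiable one_ne_zero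
  -- the auxiliary field w
  obtain ⟨w, hw⟩ : ∃ w : V3 → V3, ∀ x j, w x j = B x j - k * u x j := ⟨_, fun _ _ => rfl⟩
  have hwfun : ∀ m : Fin 3, (fun y => w y m) = fun y => B y m - k * u y m := by
    intro m; funext y; rw [hw]
  have hwc : ∀ j, ContDiff ℝ 1 (fun y => w y j) := by
    intro j; rw [hwfun j]; exact (hBc j).sub (contDiff_const.mul (huc j))
  have hwd : ∀ j, Differentiable ℝ (fun y => w y j) := fun j => (hwc j).differentiable one_ne_zero
  have hpdw : ∀ (i m : Fin 3) (x : V3),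
      pd i (fun y => w y m) x = pd i (fun y => B y m) x - k * pd i (fun y => u y m) x := by
    intro i m x
    rw [hwfun m, pd_sub_const_mul i ((hBd m) x) ((hud m) x) k]
  -- componentwise equations
  have hcurlu : ∀ x j, curl u x j = α x * u x j - B x j := by
    intro x j
    have h := congrFun (h1 x) j
    simp only [Pi.add_apply, Pi.smul_apply, smul_eq_mul] at h
    linarith
  have hcurlB : ∀ x j, curl B x j = u x j + β x * B x j := by
    intro x j
    have h := congrFun (h2 x) j
    simp only [Pi.sub_apply, Pi.smul_apply, smul_eq_mul, neg_mul, Pi.neg_apply] at h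
    linarith
  -- curl components
  have hcA : ∀ (v : V3 → V3) (x : V3),
      curl v x 0 = pd 1 (fun y => v y 2) x - pd 2 (fun y => v y 1) x := fun v x => rfl
  have hcB : ∀ (v : V3 → V3) (x : V3),
      curl v x 1 = pd 2 (fun y => v y 0) x - pd 0 (fun y => v y 2) x := fun v x => rfl
  have hcC : ∀ (v : V3 → V3) (x : V3),
      curl v x 2 = pd 0 (fun y => v y 1) x - pd 1 (fun y => v y 0) x := fun v x => rfl
  -- curl is linear on w
  have hcurl_sub : ∀ x j, curl w x j = curl B x j - k * curl u x j := by
    intro x j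
    fin_cases j
    · show curl w x 0 = curl B x 0 - k * curl u x 0
      rw [hcA, hcA, hcA, hpdw, hpdw]; ring
    · show curl w x 1 = curl B x 1 - k * curl u x 1
      rw [hcB, hcB, hcB, hpdw, hpdw]; ring
    · show curl w x 2 = curl B x 2 - k * curl u x 2
      rw [hcC, hcC, hcC, hpdw, hpdw]; ring
  have hcurlu' : ∀ x j, curl u x j = lam x * u x j - w x j := by
    intro x j
    rw [hcurlu, hw]
    linear_combination (-(u x j)) * (hlamα x)
  have hcurlw : ∀ x j, curl w x j = lam x * w x j := by
    intro x j
    rw [hcurl_sub, hcurlu, hcurlB, hw]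
    linear_combination (B x j) * (hbk x) + (k * u x j) * (hlamα x) - (u x j) * hk2
  -- the flux field F = u × w
  obtain ⟨F, hF⟩ : ∃ F : V3 → V3, ∀ y, F y = cross (u y) (w y) := ⟨_, fun _ => rfl⟩
  have hFcomp0 : (fun y => F y 0) = fun y => u y 1 * w y 2 - u y 2 * w y 1 := by
    funext y; rw [hF]; simp [cross]
  have hFcomp1 : (fun y => F y 1) = fun y => u y 2 * w y 0 - u y 0 * w y 2 := by
    funext y; rw [hF]; simp [cross]
  have hFcomp2 : (fun y => F y 2) = fun y => u y 0 * w y 1 - u y 1 * w y 0 := by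
    funext y; rw [hF]; simp [cross]
  have hFc1 : ContDiff ℝ 1 F := by
    apply contDiff_pi.mpr
    intro j
    fin_cases j
    · rw [show (fun y => F y ⟨0, by norm_num⟩) = fun y => F y 0 from rfl, hFcomp0]
      exact ((huc 1).mul (hwc 2)).sub ((huc 2).mul (hwc 1))
    · rw [show (fun y => F y ⟨1, by norm_num⟩) = fun y => F y 1 from rfl, hFcomp1]
      exact ((huc 2).mul (hwc 0)).sub ((huc 0).mul (hwc 2))
    · rw [show (fun y => F y ⟨2, by norm_num⟩) = fun y => F y 2 from rfl, hFcomp2]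
      exact ((huc 0).mul (hwc 1)).sub ((huc 1).mul (hwc 0))
  have hwper : ∀ (x : V3) (i : Fin 3), w (x + Pi.single i (2 * π)) = w x := by
    intro x i
    funext j
    rw [hw, hw, congrFun (huper x i) j, congrFun (hBper x i) j]
  have hFper : ∀ (x : V3) (i : Fin 3), F (x + Pi.single i (2 * π)) = F x := by
    intro x i
    rw [hF, hF, huper x i, hwper x i]
  -- pointwise divergence identity
  have hdivF : ∀ x, div3 F x = -(w x 0 ^ 2 + w x 1 ^ 2 + w x 2 ^ 2) := by
    intro x
    have expand : div3 F x =
        (u x 1 * pd 0 (fun y => w y 2) x + w x 2 * pd 0 (fun y => u y 1) x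
          - (u x 2 * pd 0 (fun y => w y 1) x + w x 1 * pd 0 (fun y => u y 2) x))
        + (u x 2 * pd 1 (fun y => w y 0) x + w x 0 * pd 1 (fun y => u y 2) x
          - (u x 0 * pd 1 (fun y => w y 2) x + w x 2 * pd 1 (fun y => u y 0) x))
        + (u x 0 * pd 2 (fun y => w y 1) x + w x 1 * pd 2 (fun y => u y 0) x
          - (u x 1 * pd 2 (fun y => w y 0) x + w x 0 * pd 2 (fun y => u y 1) x)) := by
      unfold div3
      rw [hFcomp0, hFcomp1, hFcomp2,
        pd_sub 0 (((hud 1) x).fun_mul ((hwd 2) x)) (((hud 2) x).fun_mul ((hwd 1) x)),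
        pd_sub 1 (((hud 2) x).fun_mul ((hwd 0) x)) (((hud 0) x).fun_mul ((hwd 2) x)),
        pd_sub 2 (((hud 0) x).fun_mul ((hwd 1) x)) (((hud 1) x).fun_mul ((hwd 0) x)),
        pd_mul 0 ((hud 1) x) ((hwd 2) x), pd_mul 0 ((hud 2) x) ((hwd 1) x),
        pd_mul 1 ((hud 2) x) ((hwd 0) x), pd_mul 1 ((hud 0) x) ((hwd 2) x),
        pd_mul 2 ((hud 0) x) ((hwd 1) x), pd_mul 2 ((hud 1) x) ((hwd 0) x)]
    have hcu0 := hcurlu' x 0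
    have hcu1 := hcurlu' x 1
    have hcu2 := hcurlu' x 2
    have hcw0 := hcurlw x 0
    have hcw1 := hcurlw x 1
    have hcw2 := hcurlw x 2
    rw [hcA] at hcu0 hcw0
    rw [hcB] at hcu1 hcw1
    rw [hcC] at hcu2 hcw2
    rw [expand]
    linear_combination (w x 0) * hcu0 + (w x 1) * hcu1 + (w x 2) * hcu2
      - (u x 0) * hcw0 - (u x 1) * hcw1 - (u x 2) * hcw2
  -- w vanishes everywhere
  have hwzero : ∀ x j, w x j = 0 := by
    have hg : ∀ x, w x 0 ^ 2 + w x 1 ^ 2 + w x 2 ^ 2 = 0 := by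
      intro x
      have hgcont : Continuous fun y => w y 0 ^ 2 + w y 1 ^ 2 + w y 2 ^ 2 := by
        have h0 := (hwc 0).continuous
        have h1 := (hwc 1).continuous
        have h2 := (hwc 2).continuous
        fun_prop
      refine zero_of_integral_cube_zero _ hgcont (fun y => by positivity)
        (fun i => x i - π) ?_ x (fun i =>
          ⟨by show x i - π < x i; linarith [pi_pos],
           by show x i < x i - π + 2 * π; linarith [pi_pos]⟩)
      have heq : ∫ y in Set.Icc (fun i => x i - π) (fun i => (x i - π) + 2 * π),
          (w y 0 ^ 2 + w y 1 ^ 2 + w y 2 ^ 2) =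
          ∫ y in Set.Icc (fun i => x i - π) (fun i => (x i - π) + 2 * π), (- div3 F y) := by
        apply MeasureTheory.setIntegral_congr_fun measurableSet_Icc
        intro y _
        show w y 0 ^ 2 + w y 1 ^ 2 + w y 2 ^ 2 = -div3 F y
        rw [hdivF y]; ring
      rw [heq, MeasureTheory.integral_neg, integral_div3_cube F hFc1 hFper, neg_zero]
    intro x j
    have h := hg x
    have h0 : w x 0 = 0 := by nlinarith [sq_nonneg (w x 0), sq_nonneg (w x 1), sq_nonneg (w x 2)]
    have h1 : w x 1 = 0 := by nlinarith [sq_nonneg (w x 0), sq_nonneg (w x 1), sq_nonneg (w x 2)]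
    have h2 : w x 2 = 0 := by nlinarith [sq_nonneg (w x 0), sq_nonneg (w x 1), sq_nonneg (w x 2)]
    fin_cases j <;> assumption
  -- conclude
  constructor
  · intro x
    funext j
    have h := hcurlu' x j
    rw [hwzero x j] at h
    simpa using h
  · intro x
    funext j
    have hw0 : B x j - k * u x j = 0 := by rw [← hw]; exact hwzero x j
    have h : curl B x j = lam x * B x j := by
      rw [hcurlB]
      linear_combination (-k) * hw0 + (B x j) * (hbk x) - (u x j) * hk2
    simpa using h
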